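/- arXiv:1809.03737 — 6 statements merged into one kernel-verified Lean document; each statement's English description precedes it below -/
import Mathlib

section
/- For any x ∈ L', the set D = (x + L_{≥0}) ∩ S'_dom is nonempty and contains a unique minimal element with respect to the coordinatewise partial order ≤. (Nonemptiness follows since x + l ∈ Z_K/2 + S'_ℚ ⊆ S'_dom for suitable large l ∈ L_{≥0}; uniqueness of the minimal element follows from min-stability of S'_dom.) -/
open Matrix

/-- The intersection pairing of the lattice `L ⊗ ℚ = (V → ℚ)` given by the matrix `M`. -/
def interPair {V : Type*} [Fintype V] (M : Matrix V V ℚ) (x y : V → ℚ) : ℚ :=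
  x ⬝ᵥ M.mulVec y

/-- Riemann–Roch function `χ(x) = -(x, x - Z_K)/2`. -/
def chiRR {V : Type*} [Fintype V] (M : Matrix V V ℚ) (ZK : V → ℚ) (x : V → ℚ) : ℚ :=
  -(interPair M x (x - ZK)) / 2

/-- Coercion of an integral cycle to a rational one. -/
def toQ {V : Type*} (l : V → ℤ) : V → ℚ := fun v => (l v : ℚ)

namespace SdomAux

set_option linter.unusedSectionVars false

section
variable {V : Type*} [Fintype V] [DecidableEq V] (M : Matrix V V ℚ)

lemma toQ_add (a b : V → ℤ) : toQ (a + b) = toQ a + toQ b := by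
  funext v; simp [toQ]

lemma toQ_sub (a b : V → ℤ) : toQ (a - b) = toQ a - toQ b := by
  funext v; simp [toQ]

lemma ip_comm (hsymm : M.IsSymm) (a b : V → ℚ) : interPair M a b = interPair M b a := by
  unfold interPair
  rw [Matrix.dotProduct_mulVec, ← Matrix.mulVec_transpose, hsymm.eq, dotProduct_comm]

lemma key_identity (hsymm : M.IsSymm) (ZK x y d : V → ℚ) :
    (chiRR M ZK (y + d) - interPair M x (y + d)) - (chiRR M ZK y - interPair M x y)
      = chiRR M ZK d - interPair M (x + y) d := by
  have h1 := ip_comm M hsymm y d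
  simp only [chiRR, interPair, Matrix.mulVec_add, Matrix.mulVec_sub, dotProduct_add,
    dotProduct_sub, add_dotProduct, sub_dotProduct] at *
  ring_nf at *
  linarith

lemma submod_identity (hsymm : M.IsSymm) (ZK x y w d e : V → ℚ) (h : w - y = d - e) :
    (chiRR M ZK (y + d) - interPair M x (y + d)) + (chiRR M ZK (w - d) - interPair M x (w - d))
      - (chiRR M ZK y - interPair M x y) - (chiRR M ZK w - interPair M x w)
      = -(interPair M e d) := by
  have hw : w = y + (d - e) := by rw [← h]; ring
  subst hw
  have h1 := ip_comm M hsymm y d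
  have h2 := ip_comm M hsymm y e
  have h3 := ip_comm M hsymm d e
  simp only [chiRR, interPair, Matrix.mulVec_add, Matrix.mulVec_sub, dotProduct_add,
    dotProduct_sub, add_dotProduct, sub_dotProduct] at *
  ring_nf at *
  linarith

lemma coercive (hsymm : M.IsSymm)
    (hneg : ∀ x : V → ℚ, x ≠ 0 → interPair M x x < 0) :
    ∃ c : ℚ, 0 < c ∧ ∀ z : V → ℚ, c * (∑ v, z v ^ 2) ≤ -interPair M z z := by
  cases isEmpty_or_nonempty V with
  | inl h =>
    refine ⟨1, one_pos, fun z => ?_⟩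
    simp [interPair, dotProduct, Finset.sum_of_isEmpty]
  | inr hne =>
    set Mr : Matrix V V ℝ := M.map ((↑) : ℚ → ℝ) with hMr
    set g : (V → ℝ) → ℝ := fun y => -(y ⬝ᵥ Mr.mulVec y) with hg
    have hMrsymm : Mr.IsSymm := hsymm.map _
    have hbsymm : ∀ u w : V → ℝ, u ⬝ᵥ Mr.mulVec w = w ⬝ᵥ Mr.mulVec u := by
      intro u w
      rw [Matrix.dotProduct_mulVec, ← Matrix.mulVec_transpose, hMrsymm.eq, dotProduct_comm]
    have hcast : ∀ z : V → ℚ, g (fun v => (z v : ℝ)) = ((-interPair M z z : ℚ) : ℝ) := by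
      intro z
      simp only [hg, interPair, Matrix.mulVec, dotProduct, Matrix.map_apply, hMr]
      push_cast
      ring
    have hcont : Continuous g := by
      apply Continuous.neg
      simp only [dotProduct, Matrix.mulVec]
      exact continuous_finset_sum _ fun v _ =>
        ((continuous_apply v).mul (continuous_finset_sum _ fun u _ =>
          (continuous_const.mul (continuous_apply u))))
    have hQnn : ∀ z : V → ℚ, (0:ℚ) ≤ -interPair M z z := by
      intro z
      rcases eq_or_ne z 0 with rfl | hz
      · simp [interPair]
      · linarith [hneg z hz]
    have hpsd : ∀ y : V → ℝ, 0 ≤ g y := by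
      have hde : Dense (Set.pi Set.univ fun _ : V => Set.range ((↑) : ℚ → ℝ)) :=
        dense_pi Set.univ fun _ _ => Rat.denseRange_cast
      have hclosed : IsClosed {y : V → ℝ | 0 ≤ g y} := isClosed_le continuous_const hcont
      have hsub : (Set.pi Set.univ fun _ : V => Set.range ((↑) : ℚ → ℝ)) ⊆ {y | 0 ≤ g y} := by
        intro y hy
        choose q hq using fun v => hy v (Set.mem_univ v)
        have : y = fun v => ((q v : ℝ)) := by funext v; exact (hq v).symm
        rw [Set.mem_setOf_eq, this, hcast]
        exact_mod_cast hQnn q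
      have := hclosed.closure_subset_iff.mpr hsub
      rw [hde.closure_eq] at this
      exact fun y => this (Set.mem_univ y)
    have hsphne : (Metric.sphere (0 : V → ℝ) 1).Nonempty :=
      NormedSpace.sphere_nonempty.mpr zero_le_one
    obtain ⟨y₀, hy₀s, hy₀min⟩ :=
      (isCompact_sphere (0 : V → ℝ) 1).exists_isMinOn hsphne hcont.continuousOn
    set c₀ : ℝ := g y₀ with hc₀
    have hc₀nn : 0 ≤ c₀ := hpsd y₀
    have hy₀norm : ‖y₀‖ = 1 := by simpa using hy₀s
    have hy₀ne : y₀ ≠ 0 := by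
      intro h; rw [h] at hy₀norm; simp at hy₀norm
    have hc₀pos : 0 < c₀ := by
      rcases hc₀nn.lt_or_eq with h | h
      · exact h
      exfalso
      have hzero : ∀ w : V → ℝ, y₀ ⬝ᵥ Mr.mulVec w = 0 := by
        intro w
        set β : ℝ := y₀ ⬝ᵥ Mr.mulVec w with hβ
        set γ : ℝ := g w with hγ
        have hγnn : 0 ≤ γ := hpsd w
        have hkey : ∀ t : ℝ, 0 ≤ -2 * t * β + t ^ 2 * γ := by
          intro t
          have h1 := hpsd (y₀ + t • w)
          have hexp : g (y₀ + t • w)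
              = g y₀ - 2 * t * β + t ^ 2 * γ := by
            simp only [hg, Matrix.mulVec_add, Matrix.mulVec_smul, dotProduct_add,
              add_dotProduct, dotProduct_smul, smul_dotProduct, smul_eq_mul, hγ, hβ]
            rw [hbsymm w y₀]
            ring
          rw [hexp, ← hc₀, ← h] at h1
          linarith
        have h2 := hkey (β / (γ + 1))
        have hγ1 : 0 < γ + 1 := by linarith
        have h3 : 0 ≤ (-2 * (β/(γ+1)) * β + (β/(γ+1)) ^ 2 * γ) * (γ+1)^2 :=
          mul_nonneg h2 (by positivity)
        have h4 : (-2 * (β/(γ+1)) * β + (β/(γ+1)) ^ 2 * γ) * (γ+1)^2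
            = -(β^2 * (γ + 2)) := by
          field_simp
          ring
        rw [h4] at h3
        have h5 : β ^ 2 = 0 := le_antisymm (by nlinarith) (sq_nonneg β)
        exact pow_eq_zero_iff (by norm_num) |>.mp h5
      have hmv : Mr.mulVec y₀ = 0 := by
        funext v
        have h1 : (Pi.single v 1 : V → ℝ) ⬝ᵥ Mr.mulVec y₀ = 0 := by
          rw [hbsymm]; exact hzero _
        rwa [single_dotProduct, one_mul] at h1
      have hdet : Mr.det = 0 := by
        rw [← Matrix.exists_mulVec_eq_zero_iff]
        exact ⟨y₀, hy₀ne, hmv⟩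
      have hdetQ : M.det = 0 := by
        have heq : Mr = (Rat.castHom ℝ).mapMatrix M := rfl
        rw [heq, ← RingHom.map_det] at hdet
        have : ((M.det : ℚ) : ℝ) = 0 := by simpa using hdet
        exact_mod_cast this
      obtain ⟨q, hq, hqmv⟩ := (Matrix.exists_mulVec_eq_zero_iff).mpr hdetQ
      have := hneg q hq
      rw [interPair, hqmv] at this
      simp at this
    have hlow : ∀ y : V → ℝ, c₀ * ‖y‖ ^ 2 ≤ g y := by
      intro y
      rcases eq_or_ne y 0 with rfl | hy
      · simp [hg]
      · have hn : (0:ℝ) < ‖y‖ := norm_pos_iff.mpr hy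
        set u : V → ℝ := (‖y‖)⁻¹ • y with hu
        have hus : u ∈ Metric.sphere (0 : V → ℝ) 1 := by
          simp [hu, norm_smul, abs_of_pos (inv_pos.mpr hn), inv_mul_cancel₀ hn.ne']
        have h1 : c₀ ≤ g u := hy₀min hus
        have h2 : g u = (‖y‖)⁻¹ ^ 2 * g y := by
          simp only [hg, hu, Matrix.mulVec_smul, dotProduct_smul, smul_dotProduct, smul_eq_mul]
          ring
        rw [h2] at h1
        have := mul_le_mul_of_nonneg_left h1 (le_of_lt (mul_pos hn hn))
        calc c₀ * ‖y‖ ^ 2 = ‖y‖ * ‖y‖ * c₀ := by ring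
        _ ≤ ‖y‖ * ‖y‖ * ((‖y‖)⁻¹ ^ 2 * g y) := this
        _ = g y := by field_simp
    set n : ℕ := Fintype.card V with hn
    have hnpos : 0 < (n:ℝ) := by exact_mod_cast Fintype.card_pos
    obtain ⟨c, hc0, hcle⟩ := exists_rat_btwn (div_pos hc₀pos hnpos)
    refine ⟨c, by exact_mod_cast hc0, fun z => ?_⟩
    rcases eq_or_ne z 0 with rfl | hz
    · simp [interPair]
    have hzr : (fun v => (z v : ℝ)) ≠ 0 := by
      intro h
      apply hz
      funext v
      have h2 : (z v : ℝ) = 0 := by simpa using congrFun h v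
      show z v = 0
      exact_mod_cast h2
    set y : V → ℝ := fun v => (z v : ℝ) with hy
    have hbound : ∀ v, y v ^ 2 ≤ ‖y‖ ^ 2 := by
      intro v
      have h1 : |y v| ≤ ‖y‖ := by
        have := norm_le_pi_norm y v
        simpa using this
      calc y v ^ 2 = |y v| ^ 2 := (sq_abs _).symm
      _ ≤ ‖y‖ ^ 2 := pow_le_pow_left₀ (abs_nonneg _) h1 2
    have hsum : ∑ v, y v ^ 2 ≤ n * ‖y‖ ^ 2 := by
      calc ∑ v, y v ^ 2 ≤ ∑ _v : V, ‖y‖ ^ 2 := Finset.sum_le_sum fun v _ => hbound v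
      _ = n * ‖y‖ ^ 2 := by simp [hn, mul_comm]
    have hfin : (c:ℝ) * ∑ v, y v ^ 2 ≤ g y := by
      have h1 : (c:ℝ) * ∑ v, y v ^ 2 ≤ (c₀ / n) * (n * ‖y‖^2) := by
        apply mul_le_mul (le_of_lt hcle) hsum (Finset.sum_nonneg fun v _ => sq_nonneg _)
        positivity
      have h2 : (c₀ / n) * (n * ‖y‖^2) = c₀ * ‖y‖^2 := by field_simp
      rw [h2] at h1
      exact h1.trans (hlow y)
    rw [hcast z] at hfin
    have hfin2 : ((c * ∑ v, z v ^ 2 : ℚ) : ℝ) ≤ ((-interPair M z z : ℚ) : ℝ) := by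
      push_cast
      simpa [hy] using hfin
    exact_mod_cast hfin2

lemma ip_single_fst (v : V) (w : V → ℚ) : interPair M (Pi.single v 1) w = (M *ᵥ w) v := by
  rw [interPair, single_dotProduct, one_mul]

lemma ip_single_snd (x : V → ℚ) (v : V) : interPair M x (Pi.single v 1) = ∑ u, x u * M u v := by
  simp [interPair, Matrix.mulVec_single, dotProduct]

lemma ip_linear_fst (y w : V → ℚ) :
    interPair M y w = ∑ v, y v * interPair M (Pi.single v 1) w := by
  simp only [ip_single_fst]
  simp only [interPair, dotProduct]

lemma ip_linear_snd (x y : V → ℚ) :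
    interPair M x y = ∑ v, y v * interPair M x (Pi.single v 1) := by
  simp only [ip_single_snd]
  simp only [interPair, Matrix.mulVec, dotProduct, Finset.mul_sum]
  rw [Finset.sum_comm]
  apply Finset.sum_congr rfl
  intro v _
  apply Finset.sum_congr rfl
  intro u _
  ring

lemma Fdecomp (ZK x y : V → ℚ) :
    chiRR M ZK y - interPair M x y = -(interPair M y y)/2
      + ∑ v, y v * (interPair M (Pi.single v 1) ZK / 2 - interPair M x (Pi.single v 1)) := by
  have h1 := ip_linear_fst M y ZK
  have h2 := ip_linear_snd M x y
  have h3 : interPair M y (y - ZK) = interPair M y y - interPair M y ZK := by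
    simp [interPair, Matrix.mulVec_sub, dotProduct_sub]
  simp only [chiRR, h3, h1, h2, mul_sub, Finset.sum_sub_distrib, ← mul_div_assoc]
  rw [← Finset.sum_div]
  ring

lemma ip_nonneg (hoff : ∀ v w : V, v ≠ w → M v w = 0 ∨ M v w = 1)
    (d e : V → ℤ) (hd : 0 ≤ d) (he : 0 ≤ e) (hde : ∀ v, d v = 0 ∨ e v = 0) :
    0 ≤ interPair M (toQ e) (toQ d) := by
  simp only [interPair, toQ, Matrix.mulVec, dotProduct, Finset.mul_sum]
  apply Finset.sum_nonneg
  intro v _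
  apply Finset.sum_nonneg
  intro u _
  rcases eq_or_ne v u with rfl | hvu
  · rcases hde v with h | h <;> simp [h]
  · rcases hoff v u hvu with h | h
    · simp [h]
    · rw [h]
      have h1 : (0:ℚ) ≤ (e v : ℚ) := by exact_mod_cast he v
      have h2 : (0:ℚ) ≤ (d u : ℚ) := by exact_mod_cast hd u
      nlinarith

lemma ratbound {c t u B : ℚ} (hc : 0 < c) (ht : 0 ≤ t)
    (hineq : c * t ^ 2 + 2 * u * t ≤ 2 * B) : c * t ≤ 2 * (|B| + |u|) + c := by
  by_contra hlt
  push_neg at hlt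
  have habs : (0:ℚ) ≤ |B| + |u| := by positivity
  have ht1 : 1 < t := by nlinarith
  have key : (2 * (|B| + |u|) + c) * t < (c * t) * t :=
    mul_lt_mul_of_pos_right hlt (by linarith)
  have h2 : -(2 * u * t) ≤ 2 * |u| * t := by nlinarith [neg_abs_le u, le_abs_self u]
  have h3 : 2 * B ≤ 2 * |B| := by nlinarith [le_abs_self B]
  nlinarith [key, h2, h3, mul_nonneg (abs_nonneg B) (by linarith : (0:ℚ) ≤ t - 1)]

lemma term_lower {c t u : ℚ} (hc : 0 < c) : -(u^2)/c ≤ c * t^2 + 2 * u * t := by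
  rw [div_le_iff₀ hc]
  nlinarith [sq_nonneg (c*t + u)]

lemma quad_sublevel_finite (c : ℚ) (hc : 0 < c) (u : V → ℚ) (B : ℚ) :
    {l : V → ℤ | 0 ≤ l ∧ c * (∑ v, (l v : ℚ)^2) + 2 * ∑ v, (l v : ℚ) * u v ≤ 2 * B}.Finite := by
  classical
  set K : ℚ := ∑ v, (u v)^2 / c with hK
  set U : ℚ := ∑ v, |u v| with hU
  have hKnn : 0 ≤ K := Finset.sum_nonneg fun v _ => by positivity
  have hUb : ∀ v, |u v| ≤ U := by
    intro v
    rw [hU]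
    exact Finset.single_le_sum (f := fun v => |u v|) (fun w _ => abs_nonneg _) (Finset.mem_univ v)
  set R : ℚ := (2 * (|B + K/2| + U) + c) / c with hR
  set N : ℤ := ⌈R⌉ with hN
  apply Set.Finite.subset (Set.Finite.pi (fun v : V => Set.finite_Icc (0:ℤ) N))
  rintro l ⟨hl0, hineq⟩
  intro w _
  constructor
  · exact hl0 w
  have hsum : ∑ v, (c * (l v : ℚ)^2 + 2 * u v * (l v : ℚ)) ≤ 2 * B := by
    calc ∑ v, (c * (l v : ℚ)^2 + 2 * u v * (l v : ℚ))
        = c * (∑ v, (l v : ℚ)^2) + 2 * ∑ v, (l v : ℚ) * u v := by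
          rw [Finset.sum_add_distrib, Finset.mul_sum, Finset.mul_sum]
          congr 1
          apply Finset.sum_congr rfl
          intro v _
          ring
    _ ≤ 2 * B := hineq
  have hterm : c * (l w : ℚ)^2 + 2 * u w * (l w : ℚ) ≤ 2 * B + K := by
    have h1 : ∑ v ∈ Finset.univ.erase w, (c * (l v : ℚ)^2 + 2 * u v * (l v : ℚ))
        ≥ ∑ v ∈ Finset.univ.erase w, (-(u v ^2)/c) := by
      apply Finset.sum_le_sum
      intro v _
      exact term_lower hc
    have h2 : ∑ v ∈ Finset.univ.erase w, (-(u v ^2)/c) ≥ -K := by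
      rw [hK]
      have heq : ∑ v ∈ Finset.univ.erase w, (-(u v ^2)/c)
          = -∑ v ∈ Finset.univ.erase w, (u v ^2)/c := by
        rw [← Finset.sum_neg_distrib]
        apply Finset.sum_congr rfl
        intro v _
        ring
      rw [heq]
      have hsub : ∑ v ∈ Finset.univ.erase w, (u v ^2)/c ≤ ∑ v, (u v)^2/c :=
        Finset.sum_le_sum_of_subset_of_nonneg (Finset.erase_subset _ _)
          (fun v _ _ => by positivity)
      linarith
    have h3 := Finset.add_sum_erase Finset.univ
      (fun v => c * (l v : ℚ)^2 + 2 * u v * (l v : ℚ)) (Finset.mem_univ w)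
    have heq2 : c * (l w : ℚ)^2 + 2 * u w * (l w : ℚ)
        = (∑ v, (c * (l v : ℚ)^2 + 2 * u v * (l v : ℚ)))
          - ∑ v ∈ Finset.univ.erase w, (c * (l v : ℚ)^2 + 2 * u v * (l v : ℚ)) := by
      rw [← h3]; ring
    rw [heq2]
    linarith
  have hlw : (0:ℚ) ≤ (l w : ℚ) := by exact_mod_cast hl0 w
  have hb := ratbound hc hlw
    (by linarith : c * (l w : ℚ)^2 + 2 * (u w) * (l w : ℚ) ≤ 2 * (B + K/2))
  have hble : (l w : ℚ) ≤ R := by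
    rw [hR, le_div_iff₀ hc]
    calc (l w : ℚ) * c = c * (l w : ℚ) := by ring
    _ ≤ 2 * (|B + K/2| + |u w|) + c := hb
    _ ≤ 2 * (|B + K/2| + U) + c := by linarith [hUb w]
  have hfin : (l w : ℚ) ≤ (N : ℚ) := le_trans hble (by exact_mod_cast Int.le_ceil R)
  exact_mod_cast hfin

/-- The shifted Riemann–Roch function on integral cycles. -/
def Ffun (ZK x : V → ℚ) (l : V → ℤ) : ℚ :=
  chiRR M ZK (toQ l) - interPair M x (toQ l)

/-- Membership in the shifted dominating cone. -/
def Pdom (ZK x : V → ℚ) (l₀ : V → ℤ) : Prop :=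
  ∀ z : V → ℤ, l₀ ≤ z → l₀ ≠ z → Ffun M ZK x l₀ < Ffun M ZK x z

lemma Pdom_iff (hsymm : M.IsSymm) (ZK x : V → ℚ) (l₀ : V → ℤ) :
    (∀ l : V → ℤ, 0 ≤ l → l ≠ 0 →
        interPair M (x + toQ l₀) (toQ l) < chiRR M ZK (toQ l)) ↔ Pdom M ZK x l₀ := by
  constructor
  · intro h z hle hne
    set l : V → ℤ := z - l₀ with hl
    have h0 : 0 ≤ l := by
      rw [hl]
      exact sub_nonneg.mpr hle
    have hne0 : l ≠ 0 := by
      rw [hl]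
      exact sub_ne_zero.mpr (Ne.symm hne)
    have hkey := key_identity M hsymm ZK x (toQ l₀) (toQ l)
    have hz : toQ l₀ + toQ l = toQ z := by
      rw [← toQ_add]
      congr 1
      rw [hl]
      ring
    rw [hz] at hkey
    have := h l h0 hne0
    unfold Ffun
    linarith
  · intro h l h0 hne0
    have hkey := key_identity M hsymm ZK x (toQ l₀) (toQ l)
    have hle : l₀ ≤ l₀ + l := le_add_of_nonneg_right h0
    have hne : l₀ ≠ l₀ + l := by
      intro heq
      exact hne0 (left_eq_add.mp heq)
    have hP := h (l₀ + l) hle hne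
    unfold Ffun at hP
    rw [toQ_add] at hP
    linarith

lemma Fsubmod (hsymm : M.IsSymm) (hoff : ∀ v w : V, v ≠ w → M v w = 0 ∨ M v w = 1)
    (ZK x : V → ℚ) (z w : V → ℤ) :
    Ffun M ZK x (z ⊓ w) + Ffun M ZK x (z ⊔ w) ≤ Ffun M ZK x z + Ffun M ZK x w := by
  set d : V → ℤ := z ⊔ w - z with hd
  set e : V → ℤ := z ⊔ w - w with he
  have hd0 : 0 ≤ d := by
    rw [hd]; exact sub_nonneg.mpr le_sup_left
  have he0 : 0 ≤ e := by
    rw [he]; exact sub_nonneg.mpr le_sup_right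
  have hde : ∀ v, d v = 0 ∨ e v = 0 := by
    intro v
    rcases le_total (z v) (w v) with h | h
    · right
      simp [he, Pi.sup_apply, sup_eq_right.mpr h]
    · left
      simp [hd, Pi.sup_apply, sup_eq_left.mpr h]
  have hrel : toQ w - toQ z = toQ d - toQ e := by
    rw [← toQ_sub, ← toQ_sub]
    congr 1
    rw [hd, he]
    ring
  have hsub := submod_identity M hsymm ZK x (toQ z) (toQ w) (toQ d) (toQ e) hrel
  have hsup : toQ z + toQ d = toQ (z ⊔ w) := by
    rw [← toQ_add]; congr 1; rw [hd]; ring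
  have hinfZ : w - d = z ⊓ w := by
    funext v
    simp only [hd, Pi.sub_apply, Pi.sup_apply, Pi.inf_apply]
    rcases le_total (z v) (w v) with h | h
    · rw [sup_eq_right.mpr h, inf_eq_left.mpr h]; ring
    · rw [sup_eq_left.mpr h, inf_eq_right.mpr h]; ring
  have hinf : toQ w - toQ d = toQ (z ⊓ w) := by
    rw [← toQ_sub, hinfZ]
  rw [hsup, hinf] at hsub
  have hnn := ip_nonneg M hoff d e hd0 he0 hde
  unfold Ffun
  linarith [hsub, hnn]

lemma Pdom_inf (hsymm : M.IsSymm) (hoff : ∀ v w : V, v ≠ w → M v w = 0 ∨ M v w = 1)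
    (ZK x : V → ℚ) (l₁ l₂ : V → ℤ) (hP1 : Pdom M ZK x l₁) (hP2 : Pdom M ZK x l₂) :
    Pdom M ZK x (l₁ ⊓ l₂) := by
  intro z hz hne
  by_cases hzl : z ≤ l₁
  · have hsupne : l₂ ≠ z ⊔ l₂ := by
      intro h
      have hzle : z ≤ l₂ := sup_eq_right.mp h.symm
      exact hne (le_antisymm hz (le_inf hzl hzle))
    have h1 : Ffun M ZK x l₂ < Ffun M ZK x (z ⊔ l₂) := hP2 _ le_sup_right hsupne
    have h2 := Fsubmod M hsymm hoff ZK x z l₂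
    have h3 : z ⊓ l₂ = l₁ ⊓ l₂ :=
      le_antisymm (inf_le_inf_right l₂ hzl) (le_inf hz inf_le_right)
    rw [h3] at h2
    linarith only [h1, h2]
  · have hne1 : l₁ ≠ z ⊔ l₁ := by
      intro h
      exact hzl (sup_eq_right.mp h.symm)
    have h1 : Ffun M ZK x l₁ < Ffun M ZK x (z ⊔ l₁) := hP1 _ le_sup_right hne1
    have h2 := Fsubmod M hsymm hoff ZK x z l₁
    have h5 : Ffun M ZK x l₂ ≤ Ffun M ZK x ((z ⊓ l₁) ⊔ l₂) := by
      rcases eq_or_ne l₂ ((z ⊓ l₁) ⊔ l₂) with h | h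
      · rw [← h]
      · exact le_of_lt (hP2 _ le_sup_right h)
    have h6 := Fsubmod M hsymm hoff ZK x (z ⊓ l₁) l₂
    have h7 : (z ⊓ l₁) ⊓ l₂ = l₁ ⊓ l₂ := by
      apply le_antisymm
      · exact inf_le_inf_right l₂ inf_le_right
      · exact le_inf (le_inf hz inf_le_left) inf_le_right
    rw [h7] at h6
    linarith only [h1, h2, h5, h6]

lemma Ffun_sublevel_finite (hsymm : M.IsSymm)
    (hneg : ∀ x : V → ℚ, x ≠ 0 → interPair M x x < 0) (ZK x : V → ℚ) (B : ℚ) :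
    {l : V → ℤ | 0 ≤ l ∧ Ffun M ZK x l ≤ B}.Finite := by
  obtain ⟨c, hc, hcoer⟩ := coercive M hsymm hneg
  apply Set.Finite.subset (quad_sublevel_finite c hc
    (fun v => interPair M (Pi.single v 1) ZK / 2 - interPair M x (Pi.single v 1)) B)
  rintro l ⟨hl0, hlB⟩
  refine ⟨hl0, ?_⟩
  have hdec := Fdecomp M ZK x (toQ l)
  have hco := hcoer (toQ l)
  unfold Ffun at hlB
  simp only [toQ] at hdec hco ⊢
  linarith

lemma Pdom_exists (hsymm : M.IsSymm)
    (hneg : ∀ x : V → ℚ, x ≠ 0 → interPair M x x < 0) (ZK x : V → ℚ) :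
    ∃ l : V → ℤ, 0 ≤ l ∧ Pdom M ZK x l := by
  classical
  have hfin := Ffun_sublevel_finite M hsymm hneg ZK x (Ffun M ZK x 0)
  set t := hfin.toFinset with ht
  have h0t : (0 : V → ℤ) ∈ t := by
    rw [ht, Set.Finite.mem_toFinset]
    exact ⟨le_refl 0, le_refl _⟩
  obtain ⟨m, hmt, hmmin⟩ := t.exists_min_image (Ffun M ZK x) ⟨0, h0t⟩
  set s := t.filter (fun l => Ffun M ZK x l = Ffun M ZK x m) with hs
  have hms : m ∈ s := by
    rw [hs, Finset.mem_filter]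
    exact ⟨hmt, rfl⟩
  obtain ⟨lst, hlst, hlstmax⟩ := s.exists_max_image (fun l => ∑ v, l v) ⟨m, hms⟩
  rw [hs, Finset.mem_filter] at hlst
  obtain ⟨hlstt, hlstF⟩ := hlst
  rw [ht, Set.Finite.mem_toFinset] at hlstt
  obtain ⟨hlst0, hlstB⟩ := hlstt
  refine ⟨lst, hlst0, ?_⟩
  intro z hzle hzne
  have hz0 : 0 ≤ z := le_trans hlst0 hzle
  have hFle : Ffun M ZK x lst ≤ Ffun M ZK x z := by
    by_cases hc : Ffun M ZK x z ≤ Ffun M ZK x 0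
    · have hzt : z ∈ t := by
        rw [ht, Set.Finite.mem_toFinset]
        exact ⟨hz0, hc⟩
      rw [hlstF]
      exact hmmin z hzt
    · push_neg at hc
      calc Ffun M ZK x lst = Ffun M ZK x m := hlstF
      _ ≤ Ffun M ZK x 0 := hmmin 0 h0t
      _ ≤ Ffun M ZK x z := le_of_lt hc
  rcases hFle.lt_or_eq with h | h
  · exact h
  · exfalso
    have hzs : z ∈ s := by
      rw [hs, Finset.mem_filter, ht, Set.Finite.mem_toFinset]
      refine ⟨⟨hz0, ?_⟩, ?_⟩
      · rw [← h, hlstF]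
        exact hmmin 0 h0t
      · rw [← h, hlstF]
    have hsumle := hlstmax z hzs
    have hsumlt : ∑ v, lst v < ∑ v, z v := by
      apply Finset.sum_lt_sum
      · intro v _
        exact hzle v
      · obtain ⟨v, hv⟩ := Function.ne_iff.mp hzne
        exact ⟨v, Finset.mem_univ v, lt_of_le_of_ne (hzle v) hv⟩
    omega

end

end SdomAux

/-- for any `x ∈ L'` the set `D = (x + L_{≥0}) ∩ S'_dom` is nonempty and
has a unique minimal element (with respect to the coordinatewise order).
Elements of `D` are encoded by the effective cycle `l ∈ L_{≥0}` with `x + l ∈ S'_dom`. -/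
theorem Sdom_unique_minimal_shift
    {V : Type*} [Fintype V] [DecidableEq V]
    (M : Matrix V V ℚ) (hsymm : M.IsSymm)
    (hneg : ∀ x : V → ℚ, x ≠ 0 → interPair M x x < 0)
    (hoff : ∀ v w : V, v ≠ w → M v w = 0 ∨ M v w = 1)
    (hdiag : ∀ v : V, M v v ≤ -1)
    (ZK : V → ℚ)
    (hZK : ∀ v : V, interPair M ZK (Pi.single v 1) = M v v + 2)
    (x : V → ℚ)
    (hxint : ∀ v : V, ∃ n : ℤ, interPair M x (Pi.single v 1) = (n : ℚ)) :
    ∃! l₀ : V → ℤ,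
      (0 ≤ l₀ ∧ (∀ l : V → ℤ, 0 ≤ l → l ≠ 0 →
          interPair M (x + toQ l₀) (toQ l) < chiRR M ZK (toQ l))) ∧
      (∀ l₁ : V → ℤ, 0 ≤ l₁ →
        (∀ l : V → ℤ, 0 ≤ l → l ≠ 0 →
          interPair M (x + toQ l₁) (toQ l) < chiRR M ZK (toQ l)) →
        l₀ ≤ l₁) := by
  classical
  obtain ⟨ls, hls0, hlsP⟩ := SdomAux.Pdom_exists M hsymm hneg ZK x
  set T : Set (V → ℤ) := {l | 0 ≤ l ∧ l ≤ ls ∧ SdomAux.Pdom M ZK x l} with hT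
  have hTfin : T.Finite := by
    apply Set.Finite.subset (Set.Finite.pi (fun v : V => Set.finite_Icc (0:ℤ) (ls v)))
    rintro l ⟨h0, hle, _⟩
    intro v _
    exact ⟨h0 v, hle v⟩
  have hlsT : ls ∈ T := ⟨hls0, le_refl ls, hlsP⟩
  have hclosed : ∀ a ∈ T, ∀ b ∈ T, a ⊓ b ∈ T := by
    rintro a ⟨ha0, hale, haP⟩ b ⟨hb0, hble, hbP⟩
    exact ⟨le_inf ha0 hb0, le_trans inf_le_left hale,
      SdomAux.Pdom_inf M hsymm hoff ZK x a b haP hbP⟩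
  set tT := hTfin.toFinset with htT
  have htTne : tT.Nonempty := ⟨ls, by rw [htT, Set.Finite.mem_toFinset]; exact hlsT⟩
  set l₀ : V → ℤ := tT.inf' htTne id with hl₀
  have hl₀T : l₀ ∈ T := by
    rw [hl₀]
    exact Finset.inf'_mem T hclosed tT htTne id
      (fun i hi => (Set.Finite.mem_toFinset hTfin).mp hi)
  obtain ⟨hl₀0, hl₀le, hl₀P⟩ := hl₀T
  have hmin : ∀ l₁ : V → ℤ, 0 ≤ l₁ → SdomAux.Pdom M ZK x l₁ → l₀ ≤ l₁ := by
    intro l₁ h10 h1P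
    have hmemT : l₀ ⊓ l₁ ∈ T :=
      ⟨le_inf hl₀0 h10, le_trans inf_le_left hl₀le,
        SdomAux.Pdom_inf M hsymm hoff ZK x l₀ l₁ hl₀P h1P⟩
    have : l₀ ≤ l₀ ⊓ l₁ :=
      Finset.inf'_le id ((Set.Finite.mem_toFinset hTfin).mpr hmemT)
    exact this.trans inf_le_right
  refine ⟨l₀, ⟨⟨hl₀0, (SdomAux.Pdom_iff M hsymm ZK x l₀).mpr hl₀P⟩, ?_⟩, ?_⟩
  · intro l₁ h10 hcond
    exact hmin l₁ h10 ((SdomAux.Pdom_iff M hsymm ZK x l₁).mp hcond)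
  · rintro y ⟨⟨hy0, hycond⟩, hymin⟩
    have hyP := (SdomAux.Pdom_iff M hsymm ZK x y).mp hycond
    exact le_antisymm
      (hymin l₀ hl₀0 ((SdomAux.Pdom_iff M hsymm ZK x l₀).mpr hl₀P))
      (hmin y hy0 hyP)
end

section
/- Assume the graph is minimal in the sense that (E_v, E_v) ≤ -2 for every vertex v. If x ∈ L satisfies x ≥ 0 and χ(-x) ≤ 0, then x = 0. (Equivalently, χ(-x) ≥ 1 for every nonzero effective x; the proof uses that for any nonzero effective x there exists E_v in the support of x with (E_v, x) < 0, so that χ(-x + E_v) ≤ χ(-x), and induction terminates at χ(-E_w) = -(E_w,E_w) - 1 ≥ 1.) -/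
open Matrix

/-- on a minimal graph (all `(E_v, E_v) ≤ -2`), if `x ∈ L` is effective
and `χ(-x) ≤ 0`, then `x = 0`. -/
theorem minimal_chi_neg_le_zero_eq_zero
    {V : Type*} [Fintype V] [DecidableEq V]
    (M : Matrix V V ℚ) (hsymm : M.IsSymm)
    (hneg : ∀ x : V → ℚ, x ≠ 0 → interPair M x x < 0)
    (hoff : ∀ v w : V, v ≠ w → M v w = 0 ∨ M v w = 1)
    (hdiag : ∀ v : V, M v v ≤ -2)
    (ZK : V → ℚ)
    (hZK : ∀ v : V, interPair M ZK (Pi.single v 1) = M v v + 2)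
    (x : V → ℤ) (hx : 0 ≤ x)
    (hchi : chiRR M ZK (-(toQ x)) ≤ 0) :
    x = 0 := by
  by_contra hxne
  set xq : V → ℚ := toQ x with hxq
  have hxqne : xq ≠ 0 := by
    intro h
    apply hxne
    funext v
    have := congrFun h v
    simpa [hxq, toQ] using this
  have hxqpos : ∀ v, (0:ℚ) ≤ xq v := by
    intro v
    have := hx v
    simp only [hxq, toQ]
    exact_mod_cast this
  -- rewrite hZK as a sum
  have hZK' : ∀ v, ∑ w, ZK w * M w v = M v v + 2 := by
    intro v
    have h := hZK v
    simp only [interPair, Matrix.mulVec, dotProduct, Pi.single_apply, mul_ite, mul_one,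
      mul_zero, Finset.sum_ite_eq', Finset.mem_univ, if_true] at h
    exact h
  -- (ZK, x) = Σ x_v (M v v + 2)
  have hpair : interPair M ZK xq = ∑ v, xq v * (M v v + 2) := by
    simp only [interPair, Matrix.mulVec, dotProduct, Finset.mul_sum]
    rw [Finset.sum_comm]
    apply Finset.sum_congr rfl
    intro v _
    rw [← hZK' v, Finset.mul_sum]
    apply Finset.sum_congr rfl
    intro w _
    ring
  -- symmetry of the pairing
  have hsym' : interPair M xq ZK = interPair M ZK xq := by
    simp only [interPair, Matrix.mulVec, dotProduct, Finset.mul_sum]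
    rw [Finset.sum_comm]
    apply Finset.sum_congr rfl
    intro i _
    apply Finset.sum_congr rfl
    intro j _
    have hM : M j i = M i j := congrFun (congrFun hsymm i) j
    rw [hM]; ring
  -- expand χ(-x)
  have hexp : interPair M (-xq) (-xq - ZK) = interPair M xq xq + interPair M xq ZK := by
    simp only [interPair, sub_eq_add_neg, Matrix.mulVec_add, Matrix.mulVec_neg,
      dotProduct_add, dotProduct_neg, neg_dotProduct]
    ring
  have hchi' : 0 ≤ interPair M xq xq + interPair M xq ZK := by
    have := hchi
    rw [chiRR, hexp] at this
    linarith
  have hle : interPair M xq ZK ≤ 0 := by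
    rw [hsym', hpair]
    apply Finset.sum_nonpos
    intro v _
    have h1 := hxqpos v
    have h2 := hdiag v
    nlinarith
  have := hneg xq hxqne
  linarith
end

section
/- Let I ⊂ V, and suppose l' = Σ_{v∈I} a_v E*_v with all a_v > 0, while l'' ∈ S' is arbitrary. Then l'' ≥ l' (coordinatewise in the E-basis) if and only if the E_v-coordinates of l'' - l' are nonnegative for all v ∈ I. (The key implication: if l'' - l' = x + y with x supported on I, y supported on V∖I, and x ≥ 0, then using (l', E_u) = 0 for u ∉ I and negative definiteness one deduces y ≥ 0.) -/
open Matrix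

lemma interPair_eq {V : Type*} [Fintype V] (M : Matrix V V ℚ) (x y : V → ℚ) :
    interPair M x y = ∑ u, ∑ v, x u * (M u v * y v) := by
  simp [interPair, dotProduct, Matrix.mulVec, Finset.mul_sum]

lemma interPair_symm {V : Type*} [Fintype V] (M : Matrix V V ℚ) (hsymm : M.IsSymm)
    (x y : V → ℚ) : interPair M x y = interPair M y x := by
  rw [interPair_eq, interPair_eq, Finset.sum_comm]
  refine Finset.sum_congr rfl fun u _ => Finset.sum_congr rfl fun v _ => ?_
  rw [hsymm.apply u v]; ring

lemma interPair_single {V : Type*} [Fintype V] [DecidableEq V] (M : Matrix V V ℚ)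
    (x : V → ℚ) (w : V) : interPair M x (Pi.single w 1) = ∑ u, x u * M u w := by
  simp [interPair, dotProduct, Matrix.mulVec_single]

lemma interPair_right_decomp {V : Type*} [Fintype V] [DecidableEq V] (M : Matrix V V ℚ)
    (x y : V → ℚ) : interPair M x y = ∑ u, y u * interPair M x (Pi.single u 1) := by
  rw [interPair_eq, Finset.sum_comm]
  refine Finset.sum_congr rfl fun u _ => ?_
  rw [interPair_single, Finset.mul_sum]
  exact Finset.sum_congr rfl fun v _ => by ring

lemma interPair_sum_left {V : Type*} [Fintype V] (M : Matrix V V ℚ)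
    (s : Finset V) (c : V → ℚ) (f : V → (V → ℚ)) (y : V → ℚ) :
    interPair M (∑ u ∈ s, c u • f u) y = ∑ u ∈ s, c u * interPair M (f u) y := by
  simp only [interPair, dotProduct, Finset.sum_apply, Pi.smul_apply, smul_eq_mul,
    Finset.sum_mul, Finset.mul_sum]
  rw [Finset.sum_comm]
  exact Finset.sum_congr rfl fun u _ => Finset.sum_congr rfl fun i _ => by ring

/-- for `l' = Σ_{v∈I} a_v E*_v` with all `a_v > 0` and `l'' ∈ S'`,
one has `l'' ≥ l'` (coordinatewise) iff the `E_v`-coordinates of `l'' - l'` are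
nonnegative for all `v ∈ I`. -/
theorem ge_iff_ge_on_support
    {V : Type*} [Fintype V] [DecidableEq V]
    (M : Matrix V V ℚ) (hsymm : M.IsSymm)
    (hneg : ∀ x : V → ℚ, x ≠ 0 → interPair M x x < 0)
    (hoff : ∀ v w : V, v ≠ w → M v w = 0 ∨ M v w = 1)
    (Estar : V → (V → ℚ))
    (hEstar : ∀ u w : V, interPair M (Estar u) (Pi.single w 1) =
      if u = w then -1 else 0)
    (I : Finset V) (a : V → ℤ) (ha : ∀ v ∈ I, 0 < a v)
    (l'' : V → ℚ)
    (hS'' : ∀ v : V, interPair M l'' (Pi.single v 1) ≤ 0) :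
    (∀ v : V, (∑ u ∈ I, (a u : ℚ) • Estar u) v ≤ l'' v) ↔
    (∀ v ∈ I, (∑ u ∈ I, (a u : ℚ) • Estar u) v ≤ l'' v) := by
  constructor
  · exact fun h v _ => h v
  intro h v
  set l' : V → ℚ := ∑ u ∈ I, (a u : ℚ) • Estar u with hl'
  have hM : ∀ u w : V, u ≠ w → 0 ≤ M u w := by
    intro u w huw
    rcases hoff u w huw with h0 | h0 <;> simp [h0]
  have hl'pair : ∀ w : V, interPair M l' (Pi.single w 1) =
      if w ∈ I then -(a w : ℚ) else 0 := by
    intro w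
    rw [hl', interPair_sum_left]
    simp only [hEstar]
    rw [Finset.sum_congr rfl (fun u _ => by rw [mul_ite, mul_neg_one, mul_zero])]
    exact Finset.sum_ite_eq' I w (fun u => -(a u : ℚ))
  set d : V → ℚ := fun w => l'' w - l' w with hd
  have hdpair : ∀ w : V, w ∉ I → interPair M d (Pi.single w 1) ≤ 0 := by
    intro w hw
    have he : interPair M d (Pi.single w 1) =
        interPair M l'' (Pi.single w 1) - interPair M l' (Pi.single w 1) := by
      have hde : d = l'' - l' := by funext u; simp [hd]
      rw [hde, interPair, sub_dotProduct]; rfl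
    rw [he, hl'pair w, if_neg hw, sub_zero]
    exact hS'' w
  have hdI : ∀ w ∈ I, 0 ≤ d w := fun w hw => by
    simp only [hd]; linarith [h w hw]
  set z : V → ℚ := fun w => if w ∈ I then 0 else min (d w) 0 with hz
  set p : V → ℚ := fun w => d w - z w with hp
  have hznonpos : ∀ w, z w ≤ 0 := by
    intro w; by_cases hw : w ∈ I <;> simp [hz, hw, min_le_right]
  have hzsupp : ∀ w, z w ≠ 0 → w ∉ I := by
    intro w hzw hw; exact hzw (by simp [hz, hw])
  have hpnonneg : ∀ w, 0 ≤ p w := by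
    intro w
    by_cases hw : w ∈ I
    · simp only [hp, hz, if_pos hw, sub_zero]; exact hdI w hw
    · simp only [hp, hz, if_neg hw]
      rcases le_total (d w) 0 with hc | hc
      · simp [min_eq_left hc]
      · simp [min_eq_right hc, hc]
  have hpz : ∀ w, z w ≠ 0 → p w = 0 := by
    intro w hzw
    have hw : w ∉ I := hzsupp w hzw
    simp only [hp, hz, if_neg hw] at hzw ⊢
    rcases le_total (d w) 0 with hc | hc
    · rw [min_eq_left hc]; ring
    · exact absurd (min_eq_right hc) hzw
  have hzd : 0 ≤ interPair M z d := by
    rw [interPair_symm M hsymm z d, interPair_right_decomp M d z]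
    apply Finset.sum_nonneg
    intro u _
    by_cases hzu : z u = 0
    · simp [hzu]
    · nlinarith [hznonpos u, hdpair u (hzsupp u hzu)]
  have hzp : interPair M z p ≤ 0 := by
    rw [interPair_eq]
    apply Finset.sum_nonpos
    intro u _
    apply Finset.sum_nonpos
    intro w _
    by_cases hzu : z u = 0
    · simp [hzu]
    · by_cases huw : u = w
      · subst huw; rw [hpz u hzu, mul_zero, mul_zero]
      · exact mul_nonpos_of_nonpos_of_nonneg (hznonpos u)
          (mul_nonneg (hM u w huw) (hpnonneg w))
  have hzz : 0 ≤ interPair M z z := by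
    have hsplit : interPair M z d = interPair M z z + interPair M z p := by
      have hde : d = z + p := by funext w; simp [hp]
      rw [hde, interPair, Matrix.mulVec_add, dotProduct_add]; rfl
    linarith
  have hz0 : z = 0 := by
    by_contra hne
    exact absurd (hneg z hne) (not_lt.mpr hzz)
  by_cases hv : v ∈ I
  · exact h v hv
  · have hzv : z v = 0 := by rw [hz0]; rfl
    simp only [hz, if_neg hv] at hzv
    have hdv : 0 ≤ d v := by
      rcases le_total (d v) 0 with hc | hc
      · rw [min_eq_left hc] at hzv; linarith
      · exact hc
    have : d v = l'' v - l' v := rfl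
    linarith
end

section
/- For any l' ∈ L' and any Z ∈ L with Z ≥ 0, the set of minimizers L_{Z,l'} = {l ∈ L : 0 ≤ l ≤ Z and χ(-l'+l) = min_{0≤l''≤Z} χ(-l'+l'')} contains a unique minimal element with respect to the coordinatewise order. (This follows from submodularity: if l_1, l_2 are minimizers then so are l_1 ∧ l_2 and l_1 ∨ l_2.) -/
open Matrix

lemma ip_symm {V : Type*} [Fintype V] (M : Matrix V V ℚ) (h : M.IsSymm) (x y : V → ℚ) :
    interPair M x y = interPair M y x := by
  unfold interPair
  rw [dotProduct_mulVec, ← vecMul_transpose, h.eq, dotProduct_comm]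

lemma ip_add_left {V : Type*} [Fintype V] (M : Matrix V V ℚ) (x y z : V → ℚ) :
    interPair M (x + y) z = interPair M x z + interPair M y z := by
  simp [interPair, add_dotProduct]

lemma ip_add_right {V : Type*} [Fintype V] (M : Matrix V V ℚ) (x y z : V → ℚ) :
    interPair M x (y + z) = interPair M x y + interPair M x z := by
  simp [interPair, mulVec_add, dotProduct_add]

lemma ip_sub_left {V : Type*} [Fintype V] (M : Matrix V V ℚ) (x y z : V → ℚ) :
    interPair M (x - y) z = interPair M x z - interPair M y z := by
  simp [interPair, sub_dotProduct]

lemma ip_sub_right {V : Type*} [Fintype V] (M : Matrix V V ℚ) (x y z : V → ℚ) :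
    interPair M x (y - z) = interPair M x y - interPair M x z := by
  simp [interPair, mulVec_sub, dotProduct_sub]

lemma ip_nonneg {V : Type*} [Fintype V] (M : Matrix V V ℚ)
    (hoff : ∀ v w : V, v ≠ w → 0 ≤ M v w) (d e : V → ℚ)
    (hd : 0 ≤ d) (he : 0 ≤ e) (hde : ∀ v, d v * e v = 0) :
    0 ≤ interPair M d e := by
  unfold interPair mulVec dotProduct
  apply Finset.sum_nonneg; intro v _
  rw [Finset.mul_sum]
  apply Finset.sum_nonneg; intro w _
  rcases eq_or_ne v w with rfl | h
  · have : d v * (M v v * e v) = M v v * (d v * e v) := by ring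
    rw [this, hde v, mul_zero]
  · exact mul_nonneg (hd v) (mul_nonneg (hoff v w h) (he w))

lemma chi_key {V : Type*} [Fintype V] (M : Matrix V V ℚ) (hsymm : M.IsSymm)
    (ZK x y d : V → ℚ) :
    chiRR M ZK (x - d) + chiRR M ZK (y + d)
      = chiRR M ZK x + chiRR M ZK y - interPair M d (y - x + d) := by
  have h1 : x - d - ZK = (x - ZK) - d := by ring
  have h2 : y + d - ZK = (y - ZK) + d := by ring
  simp only [chiRR, h1, h2, ip_add_left, ip_add_right, ip_sub_left, ip_sub_right]
  rw [ip_symm M hsymm y d, ip_symm M hsymm x d]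
  ring

lemma chi_submod {V : Type*} [Fintype V] (M : Matrix V V ℚ) (hsymm : M.IsSymm)
    (hoff : ∀ v w : V, v ≠ w → 0 ≤ M v w) (ZK : V → ℚ) (x : V → ℚ) (a b : V → ℤ) :
    chiRR M ZK (x + toQ (a ⊓ b)) + chiRR M ZK (x + toQ (a ⊔ b))
      ≤ chiRR M ZK (x + toQ a) + chiRR M ZK (x + toQ b) := by
  set d : V → ℚ := toQ a - toQ (a ⊓ b) with hdd
  set e : V → ℚ := toQ b - toQ (a ⊓ b) with hee
  have hsupQ : toQ (a ⊔ b) = toQ b + d := by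
    funext v
    simp only [hdd, toQ, Pi.sup_apply, Pi.inf_apply, Pi.add_apply, Pi.sub_apply]
    rcases le_total (a v) (b v) with h | h
    · rw [max_eq_right h, min_eq_left h]; ring
    · rw [max_eq_left h, min_eq_right h]; ring
  have hA : x + toQ (a ⊓ b) = (x + toQ a) - d := by
    funext v; simp only [hdd, Pi.add_apply, Pi.sub_apply]; ring
  have hB : x + toQ (a ⊔ b) = (x + toQ b) + d := by
    rw [hsupQ]; funext v; simp only [Pi.add_apply]; ring
  have hde : (x + toQ b) - (x + toQ a) + d = e := by
    funext v; simp only [hdd, hee, Pi.add_apply, Pi.sub_apply]; ring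
  rw [hA, hB, chi_key M hsymm ZK _ _ d, hde]
  have hd0 : 0 ≤ d := by
    intro v
    simp only [hdd, toQ, Pi.sub_apply, Pi.zero_apply, Pi.inf_apply, sub_nonneg, Int.cast_le]
    exact inf_le_left
  have he0 : 0 ≤ e := by
    intro v
    simp only [hee, toQ, Pi.sub_apply, Pi.zero_apply, Pi.inf_apply, sub_nonneg, Int.cast_le]
    exact inf_le_right
  have hprod : ∀ v, d v * e v = 0 := by
    intro v
    simp only [hdd, hee, toQ, Pi.sub_apply, Pi.inf_apply]
    rcases le_total (a v) (b v) with h | h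
    · rw [min_eq_left h]; ring
    · rw [min_eq_right h]; ring
  have := ip_nonneg M hoff d e hd0 he0 hprod
  linarith

/-- for any `l' ∈ L'` and any `Z ≥ 0` in `L`, the set of minimizers
`{l : 0 ≤ l ≤ Z, χ(-l'+l) minimal}` has a unique minimal element for the
coordinatewise order. -/
theorem unique_minimal_minimizer
    {V : Type*} [Fintype V] [DecidableEq V]
    (M : Matrix V V ℚ) (hsymm : M.IsSymm)
    (hoff : ∀ v w : V, v ≠ w → 0 ≤ M v w)
    (ZK : V → ℚ)
    (l' : V → ℚ)
    (Z : V → ℤ) (hZ : 0 ≤ Z) :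
    ∃! m : V → ℤ,
      (0 ≤ m ∧ m ≤ Z ∧
        (∀ l : V → ℤ, 0 ≤ l → l ≤ Z →
          chiRR M ZK (-l' + toQ m) ≤ chiRR M ZK (-l' + toQ l))) ∧
      (∀ l : V → ℤ, 0 ≤ l → l ≤ Z →
        (∀ l₂ : V → ℤ, 0 ≤ l₂ → l₂ ≤ Z →
          chiRR M ZK (-l' + toQ l) ≤ chiRR M ZK (-l' + toQ l₂)) →
        m ≤ l) := by
  classical
  set f : (V → ℤ) → ℚ := fun l => chiRR M ZK (-l' + toQ l) with hf
  set S : Finset (V → ℤ) := Finset.Icc 0 Z with hS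
  have hS0 : (0 : V → ℤ) ∈ S := Finset.mem_Icc.2 ⟨le_refl _, hZ⟩
  set T : Finset (V → ℤ) := S.filter (fun l => ∀ l₂ ∈ S, f l ≤ f l₂) with hT
  -- membership in T unfolded
  have hTmem : ∀ l, l ∈ T ↔ (0 ≤ l ∧ l ≤ Z ∧ ∀ l₂, 0 ≤ l₂ → l₂ ≤ Z → f l ≤ f l₂) := by
    intro l
    simp only [hT, Finset.mem_filter, hS, Finset.mem_Icc]
    constructor
    · rintro ⟨⟨h0, h1⟩, h2⟩
      exact ⟨h0, h1, fun l₂ a b => h2 l₂ ⟨a, b⟩⟩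
    · rintro ⟨h0, h1, h2⟩
      exact ⟨⟨h0, h1⟩, fun l₂ hl₂ => h2 l₂ hl₂.1 hl₂.2⟩
  -- T nonempty
  obtain ⟨m0, hm0S, hm0min⟩ := S.exists_min_image f ⟨0, hS0⟩
  have hTne : T.Nonempty := ⟨m0, Finset.mem_filter.2 ⟨hm0S, hm0min⟩⟩
  -- T is closed under ⊓
  have hclosed : ∀ a ∈ T, ∀ b ∈ T, a ⊓ b ∈ T := by
    intro a ha b hb
    rw [hTmem] at ha hb ⊢
    obtain ⟨ha0, haZ, hamin⟩ := ha
    obtain ⟨hb0, hbZ, hbmin⟩ := hb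
    have h0 : 0 ≤ a ⊓ b := le_inf ha0 hb0
    have hZ' : a ⊓ b ≤ Z := le_trans inf_le_left haZ
    have hsup0 : 0 ≤ a ⊔ b := le_trans ha0 le_sup_left
    have hsupZ : a ⊔ b ≤ Z := sup_le haZ hbZ
    have hsub := chi_submod M hsymm hoff ZK (-l') a b
    have h1 : f a ≤ f (a ⊔ b) := hamin _ hsup0 hsupZ
    have h2 : f (a ⊓ b) ≤ f b := by
      simp only [hf] at h1 ⊢
      linarith
    refine ⟨h0, hZ', fun l₂ hl₂0 hl₂Z => le_trans h2 (hbmin l₂ hl₂0 hl₂Z)⟩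
  -- the minimum element
  set m : V → ℤ := T.inf' hTne id with hm
  have hmT : m ∈ T := by
    have := Finset.inf'_mem (α := V → ℤ) {x | x ∈ T} hclosed T hTne id (fun i hi => hi)
    exact this
  have hmle : ∀ l ∈ T, m ≤ l := fun l hl => Finset.inf'_le id hl
  rw [hTmem] at hmT
  obtain ⟨hm0, hmZ, hmmin⟩ := hmT
  refine ⟨m, ⟨⟨hm0, hmZ, hmmin⟩, ?_⟩, ?_⟩
  · intro l hl0 hlZ hlmin
    exact hmle l ((hTmem l).2 ⟨hl0, hlZ, hlmin⟩)
  · rintro y ⟨⟨hy0, hyZ, hymin⟩, hyle⟩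
    have hyT : y ∈ T := (hTmem y).2 ⟨hy0, hyZ, hymin⟩
    exact le_antisymm (hyle m hm0 hmZ hmmin) (hmle y hyT)
end

section
/- Fix m ≥ 1 and a sequence (c_k)_{k≥0} of elements of a commutative ring. Let M be the m×m matrix whose entry in row i and column n (for 0 ≤ i, n ≤ m-1) is the coefficient of u^i in the formal power series (Σ_{k≥0} c_k u^k)^n. Then det M = c_1^{m(m-1)/2}. -/
/-- let `f = Σ_k c_k u^k` and let `M` be the `m×m` matrix whose
`(i, n)` entry is the coefficient of `u^i` in `f^n` (rows `i`, columns `n`,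
`0 ≤ i, n ≤ m-1`). Then `det M = c_1^{m(m-1)/2}`. -/
theorem det_powerSeries_coeff_matrix
    {R : Type*} [CommRing R] (m : ℕ) (hm : 1 ≤ m) (c : ℕ → R) :
    (Matrix.of fun i n : Fin m =>
        PowerSeries.coeff (i : ℕ) ((PowerSeries.mk c) ^ (n : ℕ))).det
      = c 1 ^ (m * (m - 1) / 2) := by
  classical
  set h : PowerSeries R := PowerSeries.mk fun k => c (k + 1) with hh
  have hdecomp : (PowerSeries.mk c : PowerSeries R)
      = PowerSeries.X * h + PowerSeries.C (c 0) := by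
    ext i
    cases i with
    | zero => simp
    | succ i =>
        simp [hh, PowerSeries.coeff_succ_X_mul, PowerSeries.coeff_C]
  set N : Matrix (Fin m) (Fin m) R :=
    Matrix.of fun i k : Fin m =>
      PowerSeries.coeff (i : ℕ) ((PowerSeries.X * h) ^ (k : ℕ)) with hN
  set A : Matrix (Fin m) (Fin m) R :=
    Matrix.of fun k n : Fin m =>
      ((n : ℕ).choose (k : ℕ) : R) * (c 0) ^ ((n : ℕ) - (k : ℕ)) with hA
  have hMNA : (Matrix.of fun i n : Fin m =>
      PowerSeries.coeff (i : ℕ) ((PowerSeries.mk c) ^ (n : ℕ))) = N * A := by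
    ext i n
    rw [Matrix.mul_apply]
    simp only [hN, hA, Matrix.of_apply, hdecomp]
    rw [add_pow, map_sum]
    have hterm : ∀ x : ℕ, PowerSeries.coeff (i : ℕ)
        ((PowerSeries.X * h) ^ x * PowerSeries.C (c 0) ^ ((n : ℕ) - x)
          * ((n : ℕ).choose x : PowerSeries R))
        = PowerSeries.coeff (i : ℕ) ((PowerSeries.X * h) ^ x) *
            (((n : ℕ).choose x : R) * (c 0) ^ ((n : ℕ) - x)) := by
      intro x
      rw [← map_natCast (PowerSeries.C (R := R)), ← map_pow, mul_assoc, ← map_mul,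
        PowerSeries.coeff_mul_C]
      ring
    simp only [hterm]
    rw [Finset.sum_subset (Finset.range_subset_range.2 (Nat.succ_le_of_lt n.isLt))
      (fun x _ hx => by
        simp only [Finset.mem_range, not_lt] at hx
        have : (n : ℕ).choose x = 0 := Nat.choose_eq_zero_of_lt (Nat.lt_of_succ_le hx)
        simp [this])]
    exact (Fin.sum_univ_eq_sum_range
      (fun x => PowerSeries.coeff (i : ℕ) ((PowerSeries.X * h) ^ x) *
        (((n : ℕ).choose x : R) * (c 0) ^ ((n : ℕ) - x))) m).symm
  rw [hMNA, Matrix.det_mul]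
  have hAdet : A.det = 1 := by
    rw [Matrix.det_of_upperTriangular]
    · simp [hA]
    · intro k n hkn
      simp only [hA, Matrix.of_apply]
      have : (n : ℕ).choose (k : ℕ) = 0 := Nat.choose_eq_zero_of_lt hkn
      simp [this]
  have hNcoeff0 : ∀ i k : Fin m, (i : ℕ) < (k : ℕ) → N i k = 0 := by
    intro i k hik
    simp only [hN, Matrix.of_apply, mul_pow]
    have hdvd : (PowerSeries.X : PowerSeries R) ^ (k : ℕ) ∣
        PowerSeries.X ^ (k : ℕ) * h ^ (k : ℕ) := dvd_mul_right _ _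
    exact (PowerSeries.X_pow_dvd_iff.mp hdvd) _ hik
  have hNdiag : ∀ k : Fin m, N k k = c 1 ^ (k : ℕ) := by
    intro k
    simp only [hN, Matrix.of_apply, mul_pow]
    rw [PowerSeries.coeff_X_pow_mul', if_pos le_rfl, Nat.sub_self,
      PowerSeries.coeff_zero_eq_constantCoeff, map_pow]
    simp [hh]
  have hNdet : N.det = c 1 ^ (m * (m - 1) / 2) := by
    rw [Matrix.det_of_lowerTriangular N]
    · rw [Finset.prod_congr rfl (fun k _ => hNdiag k), Finset.prod_pow_eq_pow_sum]
      congr 1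
      exact (Fin.sum_univ_eq_sum_range (fun i => i) m).trans (Finset.sum_range_id m)
    · intro i j hij
      exact hNcoeff0 i j hij
  rw [hAdet, hNdet, mul_one]
end

section
/- Let W be a finite subset of ℕ with 0 ∉ W, and n : W → ℕ a function. Define s : ℕ → ℕ by s(ℓ) = 0 for all ℓ greater than max W, and by downward recursion s(ℓ) = s(ℓ+1) + n(ℓ) if ℓ ∈ W, and s(ℓ) = max{0, s(ℓ+1) - 1} if ℓ ∉ W. Set p = Σ_{ℓ∈W} (n(ℓ)+1). Then: (a) s(0) = p - |W| - #{ℓ ∈ ℕ : ℓ ∉ W and s(ℓ+1) > 0}, hence s(0) ≤ p - |W|; (b) the following are equivalent: (i) s(0) = p - |W|; (ii) s(ℓ) = 0 for all ℓ ≥ 0; (iii) n(ℓ) = 0 for all ℓ ∈ W; (iv) p = |W| and s(0) = 0. -/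
/-- The downward recursion `s`: `s ℓ = 0` for `ℓ ≥ B`, `s ℓ = s (ℓ+1) + n ℓ` if
`ℓ ∈ W`, and `s ℓ = max {0, s (ℓ+1) - 1}` (truncated subtraction) if `ℓ ∉ W`. -/
def sFun (W : Finset ℕ) (n : ℕ → ℕ) (B : ℕ) (ℓ : ℕ) : ℕ :=
  if h : B ≤ ℓ then 0
  else if ℓ ∈ W then sFun W n B (ℓ + 1) + n ℓ
  else sFun W n B (ℓ + 1) - 1
termination_by B - ℓ
decreasing_by all_goals omega

lemma sFun_all_zero (W : Finset ℕ) (n : ℕ → ℕ) (B : ℕ)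
    (h : ∀ m ∈ W, n m = 0) : ∀ ℓ, sFun W n B ℓ = 0 := by
  have H : ∀ k ℓ, B ≤ ℓ + k → sFun W n B ℓ = 0 := by
    intro k
    induction k with
    | zero => intro ℓ hℓ; rw [sFun]; simp [show B ≤ ℓ by omega]
    | succ k ih =>
      intro ℓ hℓ
      rw [sFun]
      split
      · rfl
      · split
        · rename_i _ hm
          rw [ih (ℓ + 1) (by omega), h ℓ hm]
        · rw [ih (ℓ + 1) (by omega)]
  intro ℓ
  exact H B ℓ (by omega)

lemma sFun_key (W : Finset ℕ) (n : ℕ → ℕ) (B : ℕ) :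
    ∀ k ℓ, B ≤ ℓ + k →
      (sFun W n B ℓ : ℤ) = ∑ m ∈ Finset.Ico ℓ B,
        ((if m ∈ W then (n m : ℤ) + 1 else 0) -
          (if m ∈ W then 1 else if 0 < sFun W n B (m + 1) then 1 else 0)) := by
  intro k
  induction k with
  | zero =>
    intro ℓ hℓ
    rw [sFun]
    simp [show B ≤ ℓ by omega, Finset.Ico_eq_empty_of_le (show B ≤ ℓ by omega)]
  | succ k ih =>
    intro ℓ hℓ
    by_cases hB : B ≤ ℓ
    · rw [sFun]
      simp [hB, Finset.Ico_eq_empty_of_le hB]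
    · push_neg at hB
      rw [Finset.sum_eq_sum_Ico_succ_bot hB, ← ih (ℓ + 1) (by omega)]
      rw [sFun]
      simp only [show ¬ B ≤ ℓ by omega, dite_false]
      split
      · push_cast; ring
      · split <;> omega

/-- with `s` as above (with `B = max W + 1`, so `s ℓ = 0` for
`ℓ > max W`) and `p = Σ_{ℓ∈W} (n ℓ + 1)`:
(a) `s 0 = p - |W| - #{ℓ : ℓ ∉ W, s(ℓ+1) > 0}`, hence `s 0 ≤ p - |W|`;
(b) `s 0 = p - |W|` ⟺ `s ≡ 0` ⟺ `n ≡ 0` on `W` ⟺ (`p = |W|` and `s 0 = 0`). -/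
theorem sFun_formula_and_tfae
    (W : Finset ℕ) (hW : 0 ∉ W) (n : ℕ → ℕ) :
    letI B := W.sup id + 1
    letI s := sFun W n B
    letI p := ∑ ℓ ∈ W, (n ℓ + 1)
    ((s 0 : ℤ) = (p : ℤ) - W.card -
        ((Finset.range B).filter (fun ℓ => ℓ ∉ W ∧ 0 < s (ℓ + 1))).card ∧
      (s 0 : ℤ) ≤ (p : ℤ) - W.card) ∧
    (((s 0 : ℤ) = (p : ℤ) - W.card) ↔ (∀ ℓ : ℕ, s ℓ = 0)) ∧
    ((∀ ℓ : ℕ, s ℓ = 0) ↔ (∀ ℓ ∈ W, n ℓ = 0)) ∧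
    ((∀ ℓ ∈ W, n ℓ = 0) ↔ (p = W.card ∧ s 0 = 0)) := by
  set B := W.sup id + 1 with hBdef
  set s := sFun W n B with hsdef
  set p := ∑ ℓ ∈ W, (n ℓ + 1) with hpdef
  have hWB : ∀ m ∈ W, m < B := by
    intro m hm
    have := Finset.le_sup (f := id) hm
    simp only [id] at this
    omega
  have hfilterW : (Finset.range B).filter (fun m => m ∈ W) = W := by
    ext m
    simp only [Finset.mem_filter, Finset.mem_range]
    exact ⟨fun h => h.2, fun h => ⟨hWB m h, h⟩⟩
  -- part (a)
  have hA : (s 0 : ℤ) = (p : ℤ) - W.card -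
      ((Finset.range B).filter (fun ℓ => ℓ ∉ W ∧ 0 < s (ℓ + 1))).card := by
    have hk := sFun_key W n B B 0 (by omega)
    rw [show Finset.Ico 0 B = Finset.range B by rw [Finset.range_eq_Ico]] at hk
    have hAsum : ∑ m ∈ Finset.range B, (if m ∈ W then (n m : ℤ) + 1 else 0) = (p : ℤ) := by
      rw [← Finset.sum_filter, hfilterW, hpdef]
      push_cast
      ring
    have hDsum : ∑ m ∈ Finset.range B,
        (if m ∈ W then (1 : ℤ) else if 0 < sFun W n B (m + 1) then 1 else 0) =
        (W.card : ℤ) +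
          ((Finset.range B).filter (fun ℓ => ℓ ∉ W ∧ 0 < s (ℓ + 1))).card := by
      have hD : ∀ m, (if m ∈ W then (1:ℤ) else if 0 < sFun W n B (m + 1) then 1 else 0) =
          (if m ∈ W then (1:ℤ) else 0) +
          (if m ∉ W ∧ 0 < sFun W n B (m + 1) then (1:ℤ) else 0) := by
        intro m
        by_cases hm : m ∈ W <;> by_cases hs : 0 < sFun W n B (m + 1) <;> simp [hm, hs]
      rw [Finset.sum_congr rfl (fun m _ => hD m), Finset.sum_add_distrib,
        Finset.sum_boole, Finset.sum_boole, hfilterW]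
    rw [hsdef, hk, Finset.sum_sub_distrib, hAsum, hDsum]
    ring
  have hple : p = ∑ ℓ ∈ W, n ℓ + W.card := by
    rw [hpdef, Finset.sum_add_distrib]
    simp
  -- (iii) → (ii)
  have h32 : (∀ ℓ ∈ W, n ℓ = 0) → ∀ ℓ, s ℓ = 0 := fun h => sFun_all_zero W n B h
  -- (ii) → (iii)
  have h23 : (∀ ℓ, s ℓ = 0) → ∀ ℓ ∈ W, n ℓ = 0 := by
    intro h ℓ hℓ
    have h1 := h ℓ
    have h2 := h (ℓ + 1)
    have heq : s ℓ = s (ℓ + 1) + n ℓ := by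
      rw [hsdef, sFun]
      simp [show ¬ B ≤ ℓ by have := hWB ℓ hℓ; omega, hℓ]
    omega
  -- (i) → (iii)
  have h13 : (s 0 : ℤ) = (p : ℤ) - W.card → ∀ ℓ ∈ W, n ℓ = 0 := by
    intro h
    have hcount : ((Finset.range B).filter (fun ℓ => ℓ ∉ W ∧ 0 < s (ℓ + 1))).card = 0 := by
      omega
    rw [Finset.card_eq_zero, Finset.filter_eq_empty_iff] at hcount
    have h0B : 0 ∈ Finset.range B := by simp [hBdef]
    have hs1 : s 1 = 0 := by
      have h01 := hcount h0B
      simp only [hW, not_false_iff, true_and, not_lt, Nat.le_zero, zero_add] at h01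
      exact h01
    have hs0 : s 0 = 0 := by
      rw [hsdef, sFun]
      simp only [show ¬ B ≤ 0 by omega, dite_false, if_neg hW]
      rw [hsdef] at hs1
      rw [zero_add]
      omega
    have hsum : ∑ ℓ ∈ W, n ℓ = 0 := by omega
    intro ℓ hℓ
    exact (Finset.sum_eq_zero_iff).mp hsum ℓ hℓ
  -- (iii) → (iv)
  have h34 : (∀ ℓ ∈ W, n ℓ = 0) → p = W.card ∧ s 0 = 0 := by
    intro h
    have hsum : ∑ ℓ ∈ W, n ℓ = 0 := Finset.sum_eq_zero h
    exact ⟨by omega, h32 h 0⟩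
  refine ⟨⟨hA, by omega⟩, ?_, ⟨h23, h32⟩, ?_⟩
  · exact ⟨fun h => h32 (h13 h), fun h => by
      have := h34 (h23 h)
      omega⟩
  · refine ⟨h34, fun ⟨hp, hs0⟩ => h13 ?_⟩
    omega
end
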